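/- Let q be real with 0 < q < 1, and let [k]_q = (1-q^k)/(1-q). Define Z_n[s_1,…,s_m] = ∑_{n ≥ k_1 ≥ ⋯ ≥ k_m ≥ 1} ∏_{j=1}^m q^{k_j}[k_j]_q^{-s_j} and A_n[s_1,…,s_m] = ∑_{n ≥ k_1 ≥ ⋯ ≥ k_m ≥ 1} (-1)^{k_1+1} q^{k_1(k_1+1)/2} C_q(n,k_1) ∏_{j=1}^m q^{(s_j-1)k_j}[k_j]_q^{-s_j}. Then for all positive integers n, r, a_1,b_1,…,a_r,b_r: Z_n applied to the composition ({1}^{a_1-1}, b_1+1, {1}^{a_2-1}, b_2+1, …, {1}^{a_{r-1}-1}, b_{r-1}+1, {1}^{a_r-1}, b_r) equals A_n applied to (a_1, {1}^{b_1-1}, a_2+1, {1}^{b_2-1}, …, a_r+1, {1}^{b_r-1}). -/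

import Mathlib

/-- Gaussian binomial coefficient, vanishing unless `k ≤ n`. -/
noncomputable def qbinom (q : ℝ) (n k : ℕ) : ℝ :=
  if k ≤ n then ∏ j ∈ Finset.Icc 1 k, (1 - q ^ (n - k + j)) / (1 - q ^ j) else 0

/-- The `q`-analog of a natural number: `[k]_q = (1-q^k)/(1-q)`. -/
noncomputable def qnum (q : ℝ) (k : ℕ) : ℝ := (1 - q ^ k) / (1 - q)

/-- `Zn q n [s₁,…,s_m] = ∑_{n ≥ k₁ ≥ ⋯ ≥ k_m ≥ 1} ∏_j q^{k_j} [k_j]_q^{-s_j}`. -/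
noncomputable def Zn (q : ℝ) : ℕ → List ℕ → ℝ
  | _, [] => 1
  | n, s :: t => ∑ k ∈ Finset.Icc 1 n, q ^ k / (qnum q k) ^ s * Zn q k t

/-- `Wn q n [s₁,…,s_m] = ∑_{n ≥ k₁ ≥ ⋯ ≥ k_m ≥ 1} ∏_j q^{(s_j-1) k_j} [k_j]_q^{-s_j}`. -/
noncomputable def Wn (q : ℝ) : ℕ → List ℕ → ℝ
  | _, [] => 1
  | n, s :: t => ∑ k ∈ Finset.Icc 1 n,
      q ^ (((s : ℤ) - 1) * (k : ℤ)) / (qnum q k) ^ s * Wn q k t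

/-- `An q n [s₁,…,s_m] = ∑_{n ≥ k₁ ≥ ⋯ ≥ k_m ≥ 1} (-1)^{k₁+1} q^{k₁(k₁+1)/2} C_q(n,k₁)
    ∏_j q^{(s_j-1) k_j} [k_j]_q^{-s_j}`. -/
noncomputable def An (q : ℝ) (n : ℕ) : List ℕ → ℝ
  | [] => 1
  | s :: t => ∑ k ∈ Finset.Icc 1 n,
      (-1 : ℝ) ^ (k + 1) * q ^ (k * (k + 1) / 2) * qbinom q n k *
        (q ^ (((s : ℤ) - 1) * (k : ℤ)) / (qnum q k) ^ s) * Wn q k t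

/-!
Both sides obey a recursion in the first entry of the argument. For `Z` it is the definition,
`Z_n[s, u] = ∑_{k ≤ n} q^k [k]^{-s} Z_k[u]`. For `A` the matching identity is
`∑_{k ≤ n} q^k [k]^{-(b+1)} A_k[u] = A_n[{1}^b, u⁺]`, where `u⁺` raises the first entry of `u`
by one (and `()⁺ = (1)`). It is proved on the differences `A_{n+1} - A_n`: by q-Pascal these are
sums against `c(n,k) = (-1)^k q^{k(k+1)/2} C_q(n,k)`, and a leading `1` in the argument divides
the difference by `[n+1]` because `c(n,k)/[k+1] = (c(n,k) - c(n,k+1))/[n+1]` telescopes.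
Hence `Z_n[u] = A_n[u^∨]` for the dual index defined by `(s, u)^∨ = ({1}^{s-1}, (u^∨)⁺)`,
and unfolding `^∨` on the blocks `({1}^{a_j-1}, b_j+1)` gives the right-hand side.
-/

open Finset

lemma sum_Icc_one_eq_sum_range {M : Type*} [AddCommMonoid M] (f : ℕ → M) (N : ℕ) :
    ∑ k ∈ Icc 1 N, f k = ∑ k ∈ range N, f (k + 1) := by
  rw [range_eq_Ico, sum_Ico_add', zero_add, Ico_add_one_right_eq_Icc]

variable {q : ℝ}

lemma one_sub_pow_ne_zero (hq0 : 0 ≤ q) (hq1 : q < 1) {j : ℕ} (hj : j ≠ 0) : 1 - q ^ j ≠ 0 :=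
  (sub_pos.2 (pow_lt_one₀ hq0 hq1 hj)).ne'

lemma qnum_zero : qnum q 0 = 0 := by simp [qnum]

lemma qnum_ne_zero (hq0 : 0 ≤ q) (hq1 : q < 1) {k : ℕ} (hk : k ≠ 0) : qnum q k ≠ 0 :=
  div_ne_zero (one_sub_pow_ne_zero hq0 hq1 hk) (sub_ne_zero.2 hq1.ne')

lemma qnum_add (m n : ℕ) : qnum q (m + n) = qnum q m + q ^ m * qnum q n := by
  simp only [qnum, pow_add]
  ring

lemma qbinom_eq_prod_range {n k : ℕ} (h : k ≤ n) :
    qbinom q n k = ∏ j ∈ range k, (1 - q ^ (n - j)) / (1 - q ^ (j + 1)) := by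
  rw [qbinom, if_pos h, prod_div_distrib, prod_div_distrib, ← Ico_add_one_right_eq_Icc,
    prod_Ico_eq_prod_range, prod_Ico_eq_prod_range, ← prod_range_reflect]
  simp only [Nat.add_sub_cancel]
  congr 1 <;> refine prod_congr rfl fun j hj => ?_
  · have := mem_range.1 hj
    congr 2
    omega
  · rw [add_comm]

lemma qbinom_zero_right (n : ℕ) : qbinom q n 0 = 1 := by simp [qbinom]

lemma qbinom_eq_zero_of_lt {n k : ℕ} (h : n < k) : qbinom q n k = 0 := by
  rw [qbinom, if_neg h.not_ge]

lemma qnum_succ_mul_qbinom_succ_right (hq0 : 0 ≤ q) (hq1 : q < 1) (n k : ℕ) :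
    qnum q (k + 1) * qbinom q n (k + 1) = qnum q (n - k) * qbinom q n k := by
  rcases lt_or_ge k n with h | h
  · rw [qbinom_eq_prod_range h, qbinom_eq_prod_range h.le, prod_range_succ, qnum, qnum]
    have := one_sub_pow_ne_zero hq0 hq1 k.succ_ne_zero
    field_simp
  · rw [qbinom_eq_zero_of_lt (by omega), Nat.sub_eq_zero_of_le h, qnum_zero]
    ring

lemma qnum_succ_mul_qbinom_succ_succ (hq0 : 0 ≤ q) (hq1 : q < 1) (n k : ℕ) :
    qnum q (k + 1) * qbinom q (n + 1) (k + 1) = qnum q (n + 1) * qbinom q n k := by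
  induction k with
  | zero => simpa [qbinom_zero_right] using qnum_succ_mul_qbinom_succ_right hq0 hq1 (n + 1) 0
  | succ k ih =>
    have h1 := qnum_succ_mul_qbinom_succ_right hq0 hq1 (n + 1) (k + 1)
    have h2 := qnum_succ_mul_qbinom_succ_right hq0 hq1 n k
    rw [Nat.add_sub_add_right] at h1
    refine mul_left_cancel₀ (qnum_ne_zero hq0 hq1 k.succ_ne_zero) ?_
    linear_combination qnum q (k + 1) * h1 + qnum q (n - k) * ih - qnum q (n + 1) * h2

lemma qbinom_succ_succ (hq0 : 0 ≤ q) (hq1 : q < 1) {n k : ℕ} (h : k ≤ n) :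
    qbinom q (n + 1) (k + 1) = q ^ (n - k) * qbinom q n k + qbinom q n (k + 1) := by
  have h1 := qnum_succ_mul_qbinom_succ_succ hq0 hq1 n k
  have h2 := qnum_succ_mul_qbinom_succ_right hq0 hq1 n k
  have h3 : qnum q (n + 1) = qnum q (n - k) + q ^ (n - k) * qnum q (k + 1) := by
    rw [← qnum_add]
    congr 1
    omega
  refine mul_left_cancel₀ (qnum_ne_zero hq0 hq1 k.succ_ne_zero) ?_
  linear_combination h1 + qbinom q n k * h3 - h2

noncomputable def altQBinom (q : ℝ) (n k : ℕ) : ℝ :=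
  (-1) ^ k * q ^ (k * (k + 1) / 2) * qbinom q n k

lemma succ_mul_succ_succ_div_two (k : ℕ) :
    (k + 1) * (k + 1 + 1) / 2 = k * (k + 1) / 2 + (k + 1) := by
  rw [show (k + 1) * (k + 1 + 1) = k * (k + 1) + 2 * (k + 1) by ring,
    Nat.add_mul_div_left _ _ two_pos]

lemma altQBinom_zero_right (n : ℕ) : altQBinom q n 0 = 1 := by
  simp [altQBinom, qbinom_zero_right]

lemma altQBinom_succ_self (n : ℕ) : altQBinom q n (n + 1) = 0 := by
  rw [altQBinom, qbinom_eq_zero_of_lt n.lt_succ_self, mul_zero]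

lemma altQBinom_succ (n k : ℕ) :
    altQBinom q n (k + 1) =
      -((-1) ^ k * q ^ (k * (k + 1) / 2) * q ^ (k + 1) * qbinom q n (k + 1)) := by
  rw [altQBinom, succ_mul_succ_succ_div_two, pow_add, pow_succ]
  ring

lemma qnum_succ_mul_altQBinom_succ_right (hq0 : 0 ≤ q) (hq1 : q < 1) (n k : ℕ) :
    qnum q (k + 1) * altQBinom q n (k + 1) = -(q ^ (k + 1) * qnum q (n - k) * altQBinom q n k) := by
  rw [altQBinom_succ, altQBinom]
  linear_combination (-(-1) ^ k * q ^ (k * (k + 1) / 2) * q ^ (k + 1)) *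
    qnum_succ_mul_qbinom_succ_right hq0 hq1 n k

lemma qnum_succ_mul_altQBinom_succ_succ (hq0 : 0 ≤ q) (hq1 : q < 1) (n k : ℕ) :
    qnum q (k + 1) * altQBinom q (n + 1) (k + 1) =
      -(q ^ (k + 1) * qnum q (n + 1) * altQBinom q n k) := by
  rw [altQBinom_succ, altQBinom]
  linear_combination (-(-1) ^ k * q ^ (k * (k + 1) / 2) * q ^ (k + 1)) *
    qnum_succ_mul_qbinom_succ_succ hq0 hq1 n k

lemma altQBinom_succ_succ_sub (hq0 : 0 ≤ q) (hq1 : q < 1) {n k : ℕ} (h : k ≤ n) :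
    altQBinom q (n + 1) (k + 1) - altQBinom q n (k + 1) = -(q ^ (n + 1) * altQBinom q n k) := by
  have hpow : q ^ (k + 1) * q ^ (n - k) = q ^ (n + 1) := by
    rw [← pow_add]
    congr 1
    omega
  rw [altQBinom_succ, altQBinom_succ, altQBinom, qbinom_succ_succ hq0 hq1 h, ← hpow]
  ring

lemma altQBinom_div_qnum_succ (hq0 : 0 ≤ q) (hq1 : q < 1) {n k : ℕ} (h : k ≤ n) :
    altQBinom q n k / qnum q (k + 1) =
      (altQBinom q n k - altQBinom q n (k + 1)) / qnum q (n + 1) := by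
  have h1 := qnum_succ_mul_altQBinom_succ_right hq0 hq1 n k
  have h2 : qnum q (n + 1) = qnum q (k + 1) + q ^ (k + 1) * qnum q (n - k) := by
    rw [← qnum_add]
    congr 1
    omega
  have := qnum_ne_zero hq0 hq1 k.succ_ne_zero
  have := qnum_ne_zero hq0 hq1 n.succ_ne_zero
  field_simp
  linear_combination altQBinom q n k * h2 + h1

lemma sum_Ico_altQBinom_div_qnum_succ (hq0 : 0 ≤ q) (hq1 : q < 1) {n i : ℕ} (h : i ≤ n + 1) :
    ∑ k ∈ Ico i (n + 1), altQBinom q n k / qnum q (k + 1) = altQBinom q n i / qnum q (n + 1) := by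
  rw [sum_congr rfl fun k hk => altQBinom_div_qnum_succ hq0 hq1 (by grind), ← sum_div]
  congr 1
  have htel := sum_Ico_sub (altQBinom q n) h
  rw [altQBinom_succ_self, zero_sub, ← neg_inj, neg_neg, ← sum_neg_distrib] at htel
  simpa only [neg_sub] using htel

noncomputable def wTerm (q : ℝ) (k s : ℕ) (t : List ℕ) : ℝ :=
  q ^ (((s : ℤ) - 1) * (k : ℤ)) / qnum q k ^ s * Wn q k t

lemma Wn_cons (n s : ℕ) (t : List ℕ) : Wn q n (s :: t) = ∑ k ∈ Icc 1 n, wTerm q k s t := rfl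

lemma An_cons (n s : ℕ) (t : List ℕ) :
    An q n (s :: t) = -∑ k ∈ Icc 1 n, altQBinom q n k * wTerm q k s t := by
  rw [An, ← sum_neg_distrib]
  refine sum_congr rfl fun k _ => ?_
  rw [altQBinom, wTerm, pow_succ]
  ring

lemma An_zero_of_ne_nil {v : List ℕ} (hv : v ≠ []) : An q 0 v = 0 := by
  obtain ⟨s, t, rfl⟩ := List.exists_cons_of_ne_nil hv
  simp [An]

lemma wTerm_one (k : ℕ) (t : List ℕ) : wTerm q k 1 t = Wn q k t / qnum q k := by
  simp [wTerm, div_eq_inv_mul]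

lemma wTerm_succ (hq : q ≠ 0) (k s : ℕ) (t : List ℕ) :
    wTerm q k (s + 1) t = q ^ k / qnum q k * wTerm q k s t := by
  have hpow : q ^ ((((s + 1 : ℕ) : ℤ) - 1) * (k : ℤ)) = q ^ k * q ^ (((s : ℤ) - 1) * (k : ℤ)) := by
    rw [← zpow_natCast, ← zpow_add₀ hq]
    congr 1
    push_cast
    ring
  rw [wTerm, wTerm, hpow, pow_succ]
  ring

lemma An_succ_cons_sub (hq0 : 0 ≤ q) (hq1 : q < 1) (n s : ℕ) (t : List ℕ) :
    An q (n + 1) (s :: t) - An q n (s :: t) =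
      q ^ (n + 1) * ∑ k ∈ range (n + 1), altQBinom q n k * wTerm q (k + 1) s t := by
  have hextend : ∑ k ∈ range n, altQBinom q n (k + 1) * wTerm q (k + 1) s t =
      ∑ k ∈ range (n + 1), altQBinom q n (k + 1) * wTerm q (k + 1) s t := by
    rw [sum_range_succ, altQBinom_succ_self, zero_mul, add_zero]
  rw [An_cons, An_cons, sum_Icc_one_eq_sum_range, sum_Icc_one_eq_sum_range, hextend, neg_sub_neg,
    ← sum_sub_distrib, mul_sum]
  refine sum_congr rfl fun k hk => ?_
  linear_combination (-wTerm q (k + 1) s t) *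
    altQBinom_succ_succ_sub hq0 hq1 (Nat.lt_succ_iff.1 (mem_range.1 hk))

lemma An_succ_one_cons_sub (hq0 : 0 ≤ q) (hq1 : q < 1) (n s : ℕ) (t : List ℕ) :
    An q (n + 1) (1 :: s :: t) - An q n (1 :: s :: t) =
      (An q (n + 1) (s :: t) - An q n (s :: t)) / qnum q (n + 1) := by
  rw [An_succ_cons_sub hq0 hq1, An_succ_cons_sub hq0 hq1, mul_div_assoc, sum_div]
  congr 1
  calc ∑ k ∈ range (n + 1), altQBinom q n k * wTerm q (k + 1) 1 (s :: t)
      = ∑ k ∈ range (n + 1), ∑ i ∈ range (k + 1),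
          altQBinom q n k / qnum q (k + 1) * wTerm q (i + 1) s t := by
        refine sum_congr rfl fun k _ => ?_
        rw [wTerm_one, Wn_cons, sum_Icc_one_eq_sum_range, ← mul_sum]
        ring
    _ = ∑ i ∈ range (n + 1), ∑ k ∈ Ico i (n + 1),
          altQBinom q n k / qnum q (k + 1) * wTerm q (i + 1) s t := by
        simp only [range_eq_Ico]
        exact (sum_Ico_Ico_comm 0 (n + 1) _).symm
    _ = ∑ i ∈ range (n + 1), altQBinom q n i * wTerm q (i + 1) s t / qnum q (n + 1) := by
        refine sum_congr rfl fun i hi => ?_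
        rw [← sum_mul, sum_Ico_altQBinom_div_qnum_succ hq0 hq1 (by grind)]
        ring

lemma An_succ_singleton_one_sub (hq0 : 0 ≤ q) (hq1 : q < 1) (n : ℕ) :
    An q (n + 1) [1] - An q n [1] = q ^ (n + 1) / qnum q (n + 1) := by
  have hterm (k : ℕ) : wTerm q (k + 1) 1 [] = 1 / qnum q (k + 1) := by
    rw [wTerm_one]
    rfl
  simp_rw [An_succ_cons_sub hq0 hq1, hterm, ← div_eq_mul_one_div, range_eq_Ico,
    sum_Ico_altQBinom_div_qnum_succ hq0 hq1 (Nat.zero_le _), altQBinom_zero_right]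
  ring

lemma An_succ_succ_cons_sub (hq0 : 0 < q) (hq1 : q < 1) (n s : ℕ) (t : List ℕ) :
    An q (n + 1) ((s + 1) :: t) - An q n ((s + 1) :: t) =
      q ^ (n + 1) / qnum q (n + 1) * An q (n + 1) (s :: t) := by
  rw [An_succ_cons_sub hq0.le hq1, An_cons, sum_Icc_one_eq_sum_range, mul_neg, mul_sum, mul_sum,
    ← sum_neg_distrib]
  refine sum_congr rfl fun k _ => ?_
  have h := qnum_succ_mul_altQBinom_succ_succ hq0.le hq1 n k
  have := qnum_ne_zero hq0.le hq1 k.succ_ne_zero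
  have := qnum_ne_zero hq0.le hq1 n.succ_ne_zero
  rw [wTerm_succ hq0.ne']
  field_simp
  linear_combination wTerm q (k + 1) s t * h

def bumpHead : List ℕ → List ℕ
  | [] => [1]
  | s :: t => (s + 1) :: t

lemma replicate_one_append_bumpHead_ne_nil (b : ℕ) (u : List ℕ) :
    List.replicate b 1 ++ bumpHead u ≠ [] := by
  cases u <;> simp [bumpHead]

lemma An_succ_bumpHead_sub (hq0 : 0 < q) (hq1 : q < 1) (n : ℕ) (u : List ℕ) :
    An q (n + 1) (bumpHead u) - An q n (bumpHead u) =
      q ^ (n + 1) / qnum q (n + 1) * An q (n + 1) u := by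
  cases u with
  | nil => simpa [bumpHead, An] using An_succ_singleton_one_sub hq0.le hq1 n
  | cons s t => exact An_succ_succ_cons_sub hq0 hq1 n s t

lemma An_succ_replicate_one_append_bumpHead_sub (hq0 : 0 < q) (hq1 : q < 1) (n b : ℕ)
    (u : List ℕ) :
    An q (n + 1) (List.replicate b 1 ++ bumpHead u) - An q n (List.replicate b 1 ++ bumpHead u) =
      q ^ (n + 1) / qnum q (n + 1) ^ (b + 1) * An q (n + 1) u := by
  induction b with
  | zero => simpa using An_succ_bumpHead_sub hq0 hq1 n u
  | succ b ih =>
    obtain ⟨s, t, hst⟩ := List.exists_cons_of_ne_nil (replicate_one_append_bumpHead_ne_nil b u)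
    rw [List.replicate_succ, List.cons_append, hst, An_succ_one_cons_sub hq0.le hq1, ← hst, ih]
    ring

lemma sum_Icc_pow_div_qnum_pow_mul_An (hq0 : 0 < q) (hq1 : q < 1) (b : ℕ) (u : List ℕ) (n : ℕ) :
    ∑ k ∈ Icc 1 n, q ^ k / qnum q k ^ (b + 1) * An q k u =
      An q n (List.replicate b 1 ++ bumpHead u) := by
  induction n with
  | zero => simp [An_zero_of_ne_nil (replicate_one_append_bumpHead_ne_nil b u)]
  | succ n ih =>
    rw [sum_Icc_succ_top (by omega), ih]
    linear_combination -An_succ_replicate_one_append_bumpHead_sub hq0 hq1 n b u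

def dualIndex : List ℕ → List ℕ
  | [] => []
  | s :: u => List.replicate (s - 1) 1 ++ bumpHead (dualIndex u)

theorem Zn_eq_An_dualIndex (hq0 : 0 < q) (hq1 : q < 1) :
    ∀ {u : List ℕ}, (∀ s ∈ u, 0 < s) → ∀ n, Zn q n u = An q n (dualIndex u)
  | [], _, _ => rfl
  | s :: u, hu, n => by
    obtain ⟨b, rfl⟩ : ∃ b, s = b + 1 := Nat.exists_eq_add_one.2 (hu s List.mem_cons_self)
    have ih := Zn_eq_An_dualIndex hq0 hq1 fun s hs => hu s (List.mem_cons_of_mem _ hs)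
    simp only [Zn, dualIndex, ih, Nat.add_sub_cancel]
    exact sum_Icc_pow_div_qnum_pow_mul_An hq0 hq1 b (dualIndex u) n

lemma dualIndex_replicate_one_append {u y : List ℕ} {x : ℕ} (h : dualIndex u = x :: y) (m : ℕ) :
    dualIndex (List.replicate m 1 ++ u) = (x + m) :: y := by
  induction m with
  | zero => simpa using h
  | succ m ih =>
    rw [List.replicate_succ, List.cons_append, dualIndex, ih]
    rfl

lemma dualIndex_succ_succ_cons (b : ℕ) (u : List ℕ) :
    dualIndex ((b + 1 + 1) :: u) = 1 :: (List.replicate b 1 ++ bumpHead (dualIndex u)) := by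
  simp [dualIndex, List.replicate_succ]

lemma dualIndex_singleton (b : ℕ) : dualIndex [b + 1] = 1 :: List.replicate b 1 := by
  simp only [dualIndex, bumpHead, Nat.add_sub_cancel, ← List.replicate_succ']
  rfl

lemma dualIndex_flatMap_blocks (r : ℕ) (a b : ℕ → ℕ) (ha : ∀ j ≤ r, 0 < a j)
    (hb : ∀ j ≤ r, 0 < b j) :
    dualIndex ((List.range r).flatMap (fun j => List.replicate (a j - 1) 1 ++ [b j + 1]) ++
        (List.replicate (a r - 1) 1 ++ [b r])) =
      a 0 :: (List.replicate (b 0 - 1) 1 ++ (List.range r).flatMap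
        (fun j => (a (j + 1) + 1) :: List.replicate (b (j + 1) - 1) 1)) := by
  induction r generalizing a b with
  | zero =>
    obtain ⟨b', hb'⟩ := Nat.exists_eq_add_one.2 (hb 0 le_rfl)
    simp only [List.range_zero, List.flatMap_nil, List.nil_append, List.append_nil, hb',
      Nat.add_sub_cancel]
    rw [dualIndex_replicate_one_append (dualIndex_singleton b'), add_comm,
      Nat.sub_add_cancel (ha 0 le_rfl)]
  | succ r ih =>
    have ih' := ih (fun j => a (j + 1)) (fun j => b (j + 1))
      (fun j hj => ha (j + 1) (by omega)) (fun j hj => hb (j + 1) (by omega))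
    obtain ⟨b', hb'⟩ := Nat.exists_eq_add_one.2 (hb 0 (Nat.zero_le _))
    rw [List.range_succ_eq_map, List.flatMap_cons, List.flatMap_map, List.append_assoc,
      List.append_assoc, List.singleton_append]
    simp only [Nat.succ_eq_add_one, hb', List.flatMap_cons, List.flatMap_map]
    rw [dualIndex_replicate_one_append (dualIndex_succ_succ_cons b' _), ih', add_comm,
      Nat.sub_add_cancel (ha 0 (Nat.zero_le _))]
    rfl

theorem duality_main_general (q : ℝ) (hq0 : 0 < q) (hq1 : q < 1) (n r : ℕ)
    (hr : 0 < r) (a b : ℕ → ℕ) (ha : ∀ j < r, 0 < a j) (hb : ∀ j < r, 0 < b j) :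
    Zn q n
      ((List.range (r - 1)).flatMap (fun j => List.replicate (a j - 1) 1 ++ [b j + 1]) ++
        (List.replicate (a (r - 1) - 1) 1 ++ [b (r - 1)]))
    = An q n
      (([a 0] ++ List.replicate (b 0 - 1) 1) ++
        (List.range (r - 1)).flatMap
          (fun j => [a (j + 1) + 1] ++ List.replicate (b (j + 1) - 1) 1)) := by
  obtain ⟨r, rfl⟩ := Nat.exists_eq_add_one.2 hr
  rw [Nat.add_sub_cancel, Zn_eq_An_dualIndex hq0 hq1, dualIndex_flatMap_blocks r a b
    (fun j hj => ha j (by omega)) (fun j hj => hb j (by omega))]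
  · simp only [List.cons_append, List.nil_append]
  · simp only [List.mem_append, List.mem_flatMap, List.mem_range, List.mem_replicate,
      List.mem_singleton]
    grind

theorem duality_main (q : ℝ) (hq0 : 0 < q) (hq1 : q < 1) (n r : ℕ) (hn : 0 < n)
    (hr : 0 < r) (a b : ℕ → ℕ) (ha : ∀ j < r, 0 < a j) (hb : ∀ j < r, 0 < b j) :
    Zn q n
      ((List.range (r - 1)).flatMap (fun j => List.replicate (a j - 1) 1 ++ [b j + 1]) ++
        (List.replicate (a (r - 1) - 1) 1 ++ [b (r - 1)]))
    = An q n
      (([a 0] ++ List.replicate (b 0 - 1) 1) ++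
        (List.range (r - 1)).flatMap
          (fun j => [a (j + 1) + 1] ++ List.replicate (b (j + 1) - 1) 1)) :=
  duality_main_general q hq0 hq1 n r hr a b ha hb
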